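/- arXiv:1604.03347 — 3 statements merged into one kernel-verified Lean document; each statement's English description precedes it below -/
import Mathlib

section
/- (Toyoda–Bruck theorem) A quasigroup (Q,*) is medial if and only if there exist an abelian group structure (Q,+) on the set Q, a pair of commuting automorphisms φ, ψ of (Q,+) (i.e. φ∘ψ = ψ∘φ), and an element c ∈ Q such that x*y = φ(x) + ψ(y) + c for all x, y ∈ Q. -/
/-- A binary operation is a quasigroup operation if all left and right
translations are bijective. -/
def IsQuasigroup {Q : Type*} (op : Q → Q → Q) : Prop :=
  (∀ a : Q, Function.Bijective fun x => op a x) ∧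
  (∀ a : Q, Function.Bijective fun x => op x a)

/-- The medial law. -/
def IsMedial {Q : Type*} (op : Q → Q → Q) : Prop :=
  ∀ x y u v : Q, op (op x y) (op u v) = op (op x u) (op y v)

/-- Toyoda–Bruck theorem: a quasigroup `(Q, *)` is medial if and only if there is
an abelian group structure on `Q`, a pair of commuting automorphisms `φ, ψ` and an
element `c` such that `x * y = φ(x) + ψ(y) + c`. -/
theorem toyoda_bruck {Q : Type*} [Nonempty Q] (op : Q → Q → Q) (hQ : IsQuasigroup op) :
    IsMedial op ↔
      ∃ i : AddCommGroup Q, letI := i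
        ∃ (φ ψ : Q ≃+ Q) (c : Q),
          (∀ x : Q, φ (ψ x) = ψ (φ x)) ∧ ∀ x y : Q, op x y = φ x + ψ y + c := by
  obtain ⟨hL, hR⟩ := hQ
  constructor
  · intro h
    obtain ⟨e⟩ := (inferInstance : Nonempty Q)
    let α : Q ≃ Q := Equiv.ofBijective (fun x => op x e) (hR e)
    let β : Q ≃ Q := Equiv.ofBijective (fun x => op e x) (hL e)
    have hαa : ∀ x, op (α.symm x) e = x := fun x => α.apply_symm_apply x
    have hβa : ∀ x, op e (β.symm x) = x := fun x => β.apply_symm_apply x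
    have hαs : ∀ x, α.symm (op x e) = x := fun x => α.symm_apply_apply x
    have hβs : ∀ x, β.symm (op e x) = x := fun x => β.symm_apply_apply x
    let s : Q := α.symm e
    let t : Q := β.symm e
    have hs : op s e = e := hαa e
    have ht : op e t = e := hβa e
    have key : ∀ w, op (op s w) e = op e (op w t) := by
      intro w
      calc op (op s w) e = op (op s w) (op e t) := by rw [ht]
        _ = op (op s e) (op w t) := h s w e t
        _ = op e (op w t) := by rw [hs]
    let ρ : Q ≃ Q := Equiv.ofBijective (fun x => op x t) (hR t)
    let σ : Q ≃ Q := Equiv.ofBijective (fun x => op s x) (hL s)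
    have hρ : ∀ x, op (ρ.symm x) t = x := fun x => ρ.apply_symm_apply x
    have hσ : ∀ x, op s (σ.symm x) = x := fun x => σ.apply_symm_apply x
    have hAmul : ∀ p q, α.symm (op p q) = op (α.symm p) (ρ.symm q) := by
      intro p q
      rw [Equiv.symm_apply_eq]
      have : op (op (α.symm p) (ρ.symm q)) e = op p q := by
        conv_lhs => rw [← ht]
        rw [h, hαa, hρ]
      exact this.symm
    have hBmul : ∀ p q, β.symm (op p q) = op (σ.symm p) (β.symm q) := by
      intro p q
      rw [Equiv.symm_apply_eq]
      have : op e (op (σ.symm p) (β.symm q)) = op p q := by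
        conv_lhs => rw [← hs]
        rw [h, hσ, hβa]
      exact this.symm
    have hswap : ∀ w, σ.symm (α.symm w) = ρ.symm (β.symm w) := by
      intro w
      have h1 : op e (op (σ.symm (α.symm w)) t) = w := by
        rw [← key, hσ, hαa]
      have h2 : β.symm w = op (σ.symm (α.symm w)) t := by
        rw [Equiv.symm_apply_eq]; exact h1.symm
      rw [h2]
      exact (ρ.symm_apply_apply _).symm
    let add : Q → Q → Q := fun x y => op (α.symm x) (β.symm y)
    let zero : Q := op e e
    have hzero_add : ∀ y, add zero y = y := by
      intro y
      show op (α.symm (op e e)) (β.symm y) = y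
      rw [hαs, hβa]
    have hadd_zero : ∀ x, add x zero = x := by
      intro x
      show op (α.symm x) (β.symm (op e e)) = x
      rw [hβs, hαa]
    have hmed : ∀ x y u v, add (add x y) (add u v) = add (add x u) (add y v) := by
      intro x y u v
      show op (α.symm (op (α.symm x) (β.symm y))) (β.symm (op (α.symm u) (β.symm v)))
         = op (α.symm (op (α.symm x) (β.symm u))) (β.symm (op (α.symm y) (β.symm v)))
      rw [hAmul, hAmul, hBmul, hBmul]
      conv_lhs => rw [h]
      conv_rhs => rw [h]
      rw [hswap u, hswap y]
      exact h _ _ _ _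
    have hcomm' : ∀ x y, add x y = add y x := by
      intro x y
      have h5 := hmed zero x y zero
      rwa [hzero_add, hzero_add, hadd_zero, hadd_zero] at h5
    have hassoc : ∀ x y z, add (add x y) z = add x (add y z) := by
      intro x y z
      have h5 := hmed x zero y z
      rw [hadd_zero, hzero_add] at h5
      exact h5.symm
    let neg : Q → Q := fun x =>
      op e ((Equiv.ofBijective (fun w => op (α.symm x) w) (hL (α.symm x))).symm zero)
    have hneg : ∀ x, add x (neg x) = zero := by
      intro x
      have h1 : β.symm (neg x) =
          (Equiv.ofBijective (fun w => op (α.symm x) w) (hL (α.symm x))).symm zero := hβs _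
      show op (α.symm x) (β.symm (neg x)) = zero
      rw [h1]
      exact (Equiv.ofBijective (fun w => op (α.symm x) w) (hL (α.symm x))).apply_symm_apply zero
    letI instAdd : Add Q := ⟨add⟩
    letI instZero : Zero Q := ⟨zero⟩
    letI instNeg : Neg Q := ⟨neg⟩
    letI inst : AddCommGroup Q :=
      { add := add
        add_assoc := hassoc
        zero := zero
        zero_add := hzero_add
        add_zero := hadd_zero
        nsmul := nsmulRec
        neg := neg
        zsmul := zsmulRec
        neg_add_cancel := fun a => (hcomm' (neg a) a).trans (hneg a)
        add_comm := hcomm' }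
    refine ⟨inst, ?_⟩
    have hop : ∀ x y, op x y = op x e + op e y := by
      intro x y
      show op x y = op (α.symm (op x e)) (β.symm (op e y))
      rw [hαs, hβs]
    have E : ∀ x y u v : Q,
        op (op x e + op e y) e + op e (op u e + op e v)
          = op (op x e + op e u) e + op e (op y e + op e v) := by
      intro x y u v
      rw [← hop x y, ← hop u v, ← hop x u, ← hop y v,
        ← hop (op x y) (op u v), ← hop (op x u) (op y v)]
      exact h x y u v
    have E' : ∀ a y d : Q,
        op (a + op e y) e + op e (op (β.symm 0) e + d)
          = op (a + 0) e + op e (op y e + d) := by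
      intro a y d
      have h5 := E (α.symm a) y (β.symm 0) (β.symm d)
      rwa [hαa, hβa, hβa] at h5
    have I1 : ∀ a y, op (a + op e y) e
        = op a e + op e (op y e) - op e (op (β.symm 0) e) := by
      intro a y
      have h5 := E' a y 0
      simp only [add_zero] at h5
      exact eq_sub_of_add_eq h5
    have I2 : ∀ y, op e (op y e) - op e (op (β.symm 0) e) = op (op e y) e - op 0 e := by
      intro y
      have h5 := I1 0 y
      simp only [zero_add] at h5
      rw [h5]; abel
    have hαadd : ∀ a b : Q, op (a + b) e = op a e + op b e - op 0 e := by
      intro a b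
      have h1 := I1 a (β.symm b)
      rw [hβa] at h1
      have h2 := I2 (β.symm b)
      rw [hβa] at h2
      calc op (a + b) e
          = op a e + op e (op (β.symm b) e) - op e (op (β.symm 0) e) := h1
        _ = op a e + (op e (op (β.symm b) e) - op e (op (β.symm 0) e)) := by abel
        _ = op a e + (op b e - op 0 e) := by rw [h2]
        _ = op a e + op b e - op 0 e := by abel
    have I3 : ∀ y d, op e (op y e + d)
        = op (op e y) e - op 0 e + op e (op (β.symm 0) e + d) := by
      intro y d
      have h5 := E' 0 y d
      simp only [zero_add, add_zero] at h5
      calc op e (op y e + d)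
          = op (op e y) e + op e (op (β.symm 0) e + d) - op 0 e := by rw [h5]; abel
        _ = op (op e y) e - op 0 e + op e (op (β.symm 0) e + d) := by abel
    have I4 : ∀ w d, op e (w + d) - op e w
        = op e (op (β.symm 0) e + d) - op e (op (β.symm 0) e) := by
      intro w d
      have h5 := I3 (α.symm w) d
      have h6 := I3 (α.symm w) 0
      rw [hαa] at h5 h6
      simp only [add_zero] at h6
      rw [h5, h6]; abel
    have hβadd : ∀ w d : Q, op e (w + d) = op e w + op e d - op e 0 := by
      intro w d
      have h7 := I4 w d
      have h8 := I4 0 d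
      rw [zero_add] at h8
      rw [← h8] at h7
      calc op e (w + d) = op e w + (op e (w + d) - op e w) := by abel
        _ = op e w + (op e d - op e 0) := by rw [h7]
        _ = op e w + op e d - op e 0 := by abel
    let φ₀ : Q ≃ Q := α.trans (Equiv.subRight (op 0 e))
    let ψ₀ : Q ≃ Q := β.trans (Equiv.subRight (op e 0))
    let φ : Q ≃+ Q := AddEquiv.mk' φ₀ (by
      intro a b
      show op (a + b) e - op 0 e = (op a e - op 0 e) + (op b e - op 0 e)
      rw [hαadd]; abel)
    let ψ : Q ≃+ Q := AddEquiv.mk' ψ₀ (by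
      intro a b
      show op e (a + b) - op e 0 = (op e a - op e 0) + (op e b - op e 0)
      rw [hβadd]; abel)
    have hφ : ∀ x, φ x = op x e - op 0 e := fun _ => rfl
    have hψ : ∀ x, ψ x = op e x - op e 0 := fun _ => rfl
    have hop2 : ∀ x y, op x y = φ x + ψ y + (op 0 e + op e 0) := by
      intro x y
      rw [hop x y, hφ, hψ]; abel
    have hcomm2 : ∀ x, φ (ψ x) = ψ (φ x) := by
      intro x
      have H := h 0 x 0 0
      rw [hop2 0 x, hop2 0 0, hop2 x 0] at H
      rw [hop2 (φ 0 + ψ x + (op 0 e + op e 0)) (φ 0 + ψ 0 + (op 0 e + op e 0)),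
        hop2 (φ 0 + ψ 0 + (op 0 e + op e 0)) (φ x + ψ 0 + (op 0 e + op e 0))] at H
      have e1 : φ (ψ x) + (φ (op 0 e + op e 0) + ψ (op 0 e + op e 0) + (op 0 e + op e 0))
          = φ (φ 0 + ψ x + (op 0 e + op e 0)) + ψ (φ 0 + ψ 0 + (op 0 e + op e 0))
              + (op 0 e + op e 0) := by
        simp only [map_add, map_zero]; abel
      have e2 : ψ (φ x) + (φ (op 0 e + op e 0) + ψ (op 0 e + op e 0) + (op 0 e + op e 0))
          = φ (φ 0 + ψ 0 + (op 0 e + op e 0)) + ψ (φ x + ψ 0 + (op 0 e + op e 0))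
              + (op 0 e + op e 0) := by
        simp only [map_add, map_zero]; abel
      have H2 : φ (ψ x) + (φ (op 0 e + op e 0) + ψ (op 0 e + op e 0) + (op 0 e + op e 0))
          = ψ (φ x) + (φ (op 0 e + op e 0) + ψ (op 0 e + op e 0) + (op 0 e + op e 0)) := by
        rw [e1, e2]; exact H
      exact add_right_cancel H2
    exact ⟨φ, ψ, op 0 e + op e 0, hcomm2, hop2⟩
  · rintro ⟨i, hi⟩
    letI := i
    obtain ⟨φ, ψ, c, hcomm, hop⟩ := hi
    intro x y u v
    rw [hop (op x y) (op u v), hop (op x u) (op y v), hop x y, hop u v, hop x u, hop y v]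
    simp only [map_add]
    rw [hcomm y, hcomm u]
    abel
end

section
/- (Drápal's theorem) Let G be a finite abelian group. Then the number of isomorphism classes of medial quasigroups that admit an affine form over G equals Σ_{φ∈X} Σ_{ψ∈Y_φ} N(φ,ψ), where X is any set of representatives of the conjugacy classes of Aut(G); for each φ ∈ X, Y_φ is any set of representatives of the conjugacy classes of the centralizer subgroup C_{Aut(G)}(φ) (conjugation taken inside C_{Aut(G)}(φ)); and N(φ,ψ) is the number of orbits of the natural action of C_{Aut(G)}(φ) ∩ C_{Aut(G)}(ψ) on the quotient group G/Im(1 - φ - ψ). -/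
/-- A quasigroup `(Q, op)` admits an affine form over an abelian group `G` if,
after identifying `Q` with `G` via a bijection, the operation is
`x * y = φ(x) + ψ(y) + c` for automorphisms `φ, ψ` of `G` and `c ∈ G`. -/
def AdmitsAffineForm {Q : Type*} (op : Q → Q → Q) (G : Type*) [AddCommGroup G] : Prop :=
  ∃ (e : Q ≃ G) (φ ψ : G ≃+ G) (c : G),
    ∀ x y : Q, e (op x y) = φ (e x) + ψ (e y) + c

/-- Isomorphism of binary structures (quasigroups). -/
def QuasigroupIso {Q₁ Q₂ : Type*} (op₁ : Q₁ → Q₁ → Q₁) (op₂ : Q₂ → Q₂ → Q₂) : Prop :=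
  ∃ f : Q₁ ≃ Q₂, ∀ x y : Q₁, f (op₁ x y) = op₂ (f x) (f y)

/-- `mqG G` : the number of medial quasigroups admitting an affine form over the
abelian group `G`, up to isomorphism. -/
noncomputable def mqG (G : Type*) [AddCommGroup G] : ℕ :=
  Nat.card (Quot fun
    (op₁ op₂ : {op : G → G → G // IsQuasigroup op ∧ IsMedial op ∧ AdmitsAffineForm op G}) =>
    QuasigroupIso op₁.1 op₂.1)

/-- `mqN n` : the number of medial quasigroups of order `n`, up to isomorphism. -/
noncomputable def mqN (n : ℕ) : ℕ :=
  Nat.card (Quot fun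
    (op₁ op₂ : {op : Fin n → Fin n → Fin n // IsQuasigroup op ∧ IsMedial op}) =>
    QuasigroupIso op₁.1 op₂.1)

/-- The multiplicative group structure that older Mathlib put on `AddAut G`
(multiplication is composition). -/
instance AddAut.group (A : Type*) [Add A] : Group (AddAut A) where
  mul g h := AddEquiv.trans h g
  one := AddEquiv.refl _
  inv := AddEquiv.symm
  mul_assoc _ _ _ := rfl
  one_mul _ := rfl
  mul_one _ := rfl
  inv_mul_cancel := AddEquiv.self_trans_symm

/-- The endomorphism `1 - φ - ψ` of `G`. -/
def oneSub {G : Type*} [AddCommGroup G] (φ ψ : AddAut G) : G →+ G :=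
  AddMonoidHom.id G - (φ : G ≃+ G).toAddMonoidHom - (ψ : G ≃+ G).toAddMonoidHom

/-- The number of orbits of the natural action of `C(φ) ∩ C(ψ)` on the quotient
group `G ⧸ Im(1 - φ - ψ)`. -/
noncomputable def nOrbits (G : Type*) [AddCommGroup G] (φ ψ : AddAut G) : ℕ :=
  Nat.card (Quot fun q r : G ⧸ (oneSub φ ψ).range =>
    ∃ χ : AddAut G, χ ∈ Subgroup.centralizer {φ} ⊓ Subgroup.centralizer {ψ} ∧
      ∃ x : G, q = QuotientAddGroup.mk x ∧ r = QuotientAddGroup.mk (χ x))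

section Helpers

variable {G : Type} [AddCommGroup G]

def aop (φ ψ : AddAut G) (c : G) : G → G → G := fun x y => φ x + ψ y + c

lemma oneSub_apply (φ ψ : AddAut G) (x : G) : oneSub φ ψ x = x - φ x - ψ x := rfl

lemma addAut_mul_apply' (χ φ : AddAut G) (x : G) : (χ * φ) x = χ (φ x) := rfl

lemma addAut_one_apply' (x : G) : (1 : AddAut G) x = x := rfl

lemma comm_apply {χ φ φ' : AddAut G} (h : χ * φ = φ' * χ) (x : G) :
    χ (φ x) = φ' (χ x) := by
  rw [← addAut_mul_apply', h, addAut_mul_apply']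

lemma isQuasigroup_aop (φ ψ : AddAut G) (c : G) : IsQuasigroup (aop φ ψ c) := by
  constructor
  · intro a
    constructor
    · intro x y h
      simp only [aop] at h
      exact ψ.injective (add_left_cancel (add_right_cancel h))
    · intro b
      refine ⟨ψ.symm (b - φ a - c), ?_⟩
      simp only [aop, AddEquiv.apply_symm_apply]
      abel
  · intro a
    constructor
    · intro x y h
      simp only [aop] at h
      exact φ.injective (add_right_cancel (add_right_cancel h))
    · intro b
      refine ⟨φ.symm (b - ψ a - c), ?_⟩
      simp only [aop, AddEquiv.apply_symm_apply]
      abel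

lemma isMedial_aop {φ ψ : AddAut G} (h : φ * ψ = ψ * φ) (c : G) :
    IsMedial (aop φ ψ c) := by
  intro x y u v
  have hc : ∀ z, φ (ψ z) = ψ (φ z) := comm_apply h
  simp only [aop, map_add]
  rw [hc y, ← hc u]
  abel

lemma admits_aop (φ ψ : AddAut G) (c : G) : AdmitsAffineForm (aop φ ψ c) G :=
  ⟨Equiv.refl G, (φ : G ≃+ G), (ψ : G ≃+ G), c, fun _ _ => rfl⟩

lemma QuasigroupIso.refl' {Q : Type*} (op : Q → Q → Q) : QuasigroupIso op op :=
  ⟨Equiv.refl Q, fun _ _ => rfl⟩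

lemma QuasigroupIso.symm' {Q₁ Q₂ : Type*} {op₁ : Q₁ → Q₁ → Q₁} {op₂ : Q₂ → Q₂ → Q₂}
    (h : QuasigroupIso op₁ op₂) : QuasigroupIso op₂ op₁ := by
  obtain ⟨f, hf⟩ := h
  exact ⟨f.symm, fun x y => f.injective (by simp [hf])⟩

lemma QuasigroupIso.trans' {Q₁ Q₂ Q₃ : Type*} {op₁ : Q₁ → Q₁ → Q₁} {op₂ : Q₂ → Q₂ → Q₂}
    {op₃ : Q₃ → Q₃ → Q₃} (h : QuasigroupIso op₁ op₂) (h' : QuasigroupIso op₂ op₃) :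
    QuasigroupIso op₁ op₃ := by
  obtain ⟨f, hf⟩ := h
  obtain ⟨g, hg⟩ := h'
  exact ⟨f.trans g, fun x y => by simp [hf, hg]⟩

lemma IsMedial.of_iso {Q₁ Q₂ : Type*} {op₁ : Q₁ → Q₁ → Q₁} {op₂ : Q₂ → Q₂ → Q₂}
    (h : QuasigroupIso op₁ op₂) (m : IsMedial op₁) : IsMedial op₂ := by
  obtain ⟨f, hf⟩ := h
  have key : ∀ a b, op₂ (f a) (f b) = f (op₁ a b) := fun a b => (hf a b).symm
  intro x y u v
  rw [← f.apply_symm_apply x, ← f.apply_symm_apply y, ← f.apply_symm_apply u,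
    ← f.apply_symm_apply v]
  simp only [key]
  exact congrArg f (m _ _ _ _)

lemma commute_of_isMedial_aop {φ ψ : AddAut G} {c : G} (m : IsMedial (aop φ ψ c)) :
    φ * ψ = ψ * φ := by
  have h : ∀ z, φ (ψ z) = ψ (φ z) := by
    intro z
    have := m 0 z 0 0
    simp only [aop, map_add, map_zero] at this
    have h2 : φ (ψ z) + (φ c + ψ c + c) = ψ (φ z) + (φ c + ψ c + c) := by
      calc φ (ψ z) + (φ c + ψ c + c) = 0 + φ (ψ z) + φ c + (0 + 0 + ψ c) + c := by abel
        _ = 0 + 0 + φ c + (ψ (φ z) + 0 + ψ c) + c := this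
        _ = ψ (φ z) + (φ c + ψ c + c) := by abel
    exact add_right_cancel h2
  ext z
  rw [addAut_mul_apply', addAut_mul_apply']
  exact h z

end Helpers

section Criterion

variable {G : Type} [AddCommGroup G]

lemma affRel_of_iso {φ ψ φ' ψ' : AddAut G} {c c' : G}
    (h : QuasigroupIso (aop φ ψ c) (aop φ' ψ' c')) :
    ∃ (χ : AddAut G) (d : G), χ * φ = φ' * χ ∧ χ * ψ = ψ' * χ ∧
      c' = χ c + oneSub φ' ψ' d := by
  obtain ⟨f, hf⟩ := h
  simp only [aop] at hf
  have key : ∀ u v, f (u + v - c) = f u + f v - f c := by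
    intro u v
    set x := φ.symm (u - c) with hxdef
    set y := ψ.symm (v - c) with hydef
    have hx : φ x = u - c := φ.apply_symm_apply _
    have hy : ψ y = v - c := ψ.apply_symm_apply _
    have e1 : f (u + v - c) = φ' (f x) + ψ' (f y) + c' := by
      rw [← hf x y]
      exact congrArg f (by rw [hx, hy]; abel)
    have e2 : f u = φ' (f x) + ψ' (f 0) + c' := by
      rw [← hf x 0]
      exact congrArg f (by rw [hx, map_zero]; abel)
    have e3 : f v = φ' (f 0) + ψ' (f y) + c' := by
      rw [← hf 0 y]
      exact congrArg f (by rw [hy, map_zero]; abel)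
    have e4 : f c = φ' (f 0) + ψ' (f 0) + c' := by
      rw [← hf 0 0]
      exact congrArg f (by rw [map_zero, map_zero]; abel)
    rw [e1, e2, e3, e4]
    abel
  set e0 : G ≃ G := (Equiv.addRight c).trans (f.trans (Equiv.subRight (f c))) with he0def
  have he0 : ∀ x, e0 x = f (x + c) - f c := fun x => rfl
  have hadd : ∀ a b, e0 (a + b) = e0 a + e0 b := by
    intro a b
    rw [he0, he0, he0]
    have h1 : a + b + c = (a + c) + (b + c) - c := by abel
    rw [h1, key]
    abel
  set χ : AddAut G := AddEquiv.mk' e0 hadd with hχdef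
  have hχ : ∀ x, χ x = f (x + c) - f c := fun x => rfl
  set d : G := f c - χ c with hd
  have hfd : ∀ x, f x = χ x + d := by
    intro x
    have h1 : f (x + c) = f x + f (c + c) - f c := by
      have h2 := key x (c + c)
      rw [show x + (c + c) - c = x + c by abel] at h2
      exact h2
    rw [hχ x, hd, hχ c, h1]
    abel
  have H : ∀ x y, χ (φ x) + χ (ψ y) + (χ c + d) =
      φ' (χ x) + ψ' (χ y) + (φ' d + ψ' d + c') := by
    intro x y
    have h0 := hf x y
    simp only [hfd] at h0
    calc χ (φ x) + χ (ψ y) + (χ c + d) = χ (φ x + ψ y + c) + d := by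
          rw [map_add, map_add]; abel
      _ = φ' (χ x + d) + ψ' (χ y + d) + c' := h0
      _ = φ' (χ x) + ψ' (χ y) + (φ' d + ψ' d + c') := by
          rw [map_add, map_add]; abel
  have base : χ c + d = φ' d + ψ' d + c' := by
    have h1 := H 0 0
    simpa using h1
  have hconj : ∀ x y, χ (φ x) + χ (ψ y) = φ' (χ x) + ψ' (χ y) := by
    intro x y
    have h1 := H x y
    rw [base] at h1
    exact add_right_cancel h1
  have hφ : ∀ x, χ (φ x) = φ' (χ x) := by
    intro x
    have h1 := hconj x 0
    simpa using h1
  have hψ : ∀ y, χ (ψ y) = ψ' (χ y) := by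
    intro y
    have h1 := hconj 0 y
    simpa using h1
  refine ⟨χ, d, ?_, ?_, ?_⟩
  · ext z
    rw [addAut_mul_apply', addAut_mul_apply']
    exact hφ z
  · ext z
    rw [addAut_mul_apply', addAut_mul_apply']
    exact hψ z
  · rw [oneSub_apply]
    calc c' = φ' d + ψ' d + c' - (φ' d + ψ' d) := by abel
      _ = χ c + d - (φ' d + ψ' d) := by rw [base]
      _ = χ c + (d - φ' d - ψ' d) := by abel

lemma iso_of_affRel {φ ψ φ' ψ' : AddAut G} {c c' : G} (χ : AddAut G) (d : G)
    (h1 : χ * φ = φ' * χ) (h2 : χ * ψ = ψ' * χ) (h3 : c' = χ c + oneSub φ' ψ' d) :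
    QuasigroupIso (aop φ ψ c) (aop φ' ψ' c') := by
  refine ⟨χ.toEquiv.trans (Equiv.addRight d), fun x y => ?_⟩
  have hco : ∀ z, χ.toEquiv z = χ z := fun _ => rfl
  simp only [aop, Equiv.trans_apply, Equiv.coe_addRight, hco]
  simp only [map_add]
  rw [comm_apply h1, comm_apply h2, h3, oneSub_apply]
  abel

end Criterion

section TripLayer

variable {G : Type} [AddCommGroup G]

def Trip (G : Type) [AddCommGroup G] : Type :=
  {t : (AddAut G × AddAut G) × G // t.1.1 * t.1.2 = t.1.2 * t.1.1}

def Ops (G : Type) [AddCommGroup G] : Type :=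
  {op : G → G → G // IsQuasigroup op ∧ IsMedial op ∧ AdmitsAffineForm op G}

def tOp (t : Trip G) : G → G → G := aop t.1.1.1 t.1.1.2 t.1.2

def TRel (t t' : Trip G) : Prop :=
  ∃ (χ : AddAut G) (d : G), χ * t.1.1.1 = t'.1.1.1 * χ ∧ χ * t.1.1.2 = t'.1.1.2 * χ ∧
    t'.1.2 = χ t.1.2 + oneSub t'.1.1.1 t'.1.1.2 d

lemma trel_of_iso {t t' : Trip G} (h : QuasigroupIso (tOp t) (tOp t')) : TRel t t' :=
  affRel_of_iso h

lemma iso_of_trel {t t' : Trip G} (h : TRel t t') : QuasigroupIso (tOp t) (tOp t') := by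
  obtain ⟨χ, d, h1, h2, h3⟩ := h
  exact iso_of_affRel χ d h1 h2 h3

def toOps (t : Trip G) : Ops G :=
  ⟨tOp t, isQuasigroup_aop _ _ _, isMedial_aop t.2 _, admits_aop _ _ _⟩

lemma exists_trip (op : Ops G) : ∃ t : Trip G, QuasigroupIso op.1 (tOp t) := by
  obtain ⟨e, φ, ψ, c, h⟩ := op.2.2.2
  have hiso : QuasigroupIso op.1 (aop (show AddAut G from φ) (show AddAut G from ψ) c) :=
    ⟨e, h⟩
  have hm : IsMedial (aop (show AddAut G from φ) (show AddAut G from ψ) c) :=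
    IsMedial.of_iso hiso op.2.2.1
  exact ⟨⟨((show AddAut G from φ, show AddAut G from ψ), c), commute_of_isMedial_aop hm⟩, hiso⟩

noncomputable def toTrip (op : Ops G) : Trip G := (exists_trip op).choose

lemma toTrip_spec (op : Ops G) : QuasigroupIso op.1 (tOp (toTrip op)) :=
  (exists_trip op).choose_spec

def ORel (op₁ op₂ : Ops G) : Prop := QuasigroupIso op₁.1 op₂.1

noncomputable def E1 (G : Type) [AddCommGroup G] : Quot (ORel (G := G)) ≃ Quot (TRel (G := G)) where
  toFun := Quot.lift (fun op => Quot.mk _ (toTrip op)) (by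
    intro a b h
    apply Quot.sound
    exact trel_of_iso (((toTrip_spec a).symm'.trans' h).trans' (toTrip_spec b)))
  invFun := Quot.lift (fun t => Quot.mk _ (toOps t)) (by
    intro a b h
    apply Quot.sound
    exact iso_of_trel h)
  left_inv := by
    intro q
    induction q using Quot.ind with
    | _ op => exact Quot.sound ((toTrip_spec op).symm')
  right_inv := by
    intro q
    induction q using Quot.ind with
    | _ t => exact (Quot.sound (trel_of_iso (t := t) (t' := toTrip (toOps t))
        (toTrip_spec (toOps t)))).symm

end TripLayer

section NormLayer

lemma semiconj_inv {H : Type*} [Group H] {χ α β : H} (h : χ * α = β * χ) :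
    χ⁻¹ * β = α * χ⁻¹ := by
  calc χ⁻¹ * β = χ⁻¹ * (β * χ) * χ⁻¹ := by group
    _ = χ⁻¹ * (χ * α) * χ⁻¹ := by rw [← h]
    _ = α * χ⁻¹ := by group

lemma conj_of_semiconj {H : Type*} [Group H] {χ α β : H} (h : χ * α = β * χ) :
    IsConj β α :=
  isConj_iff.mpr ⟨χ⁻¹, by
    calc χ⁻¹ * β * (χ⁻¹)⁻¹ = χ⁻¹ * (β * χ) := by group
      _ = χ⁻¹ * (χ * α) := by rw [← h]
      _ = α := by group⟩

variable {G : Type} [AddCommGroup G]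
variable (X : Finset (AddAut G))
variable (Y : (φ : AddAut G) → Finset (Subgroup.centralizer {φ} : Subgroup (AddAut G)))

def orbRel (φ ψ : AddAut G) (q r : G ⧸ (oneSub φ ψ).range) : Prop :=
  ∃ χ : AddAut G, χ ∈ Subgroup.centralizer {φ} ⊓ Subgroup.centralizer {ψ} ∧
    ∃ x : G, q = QuotientAddGroup.mk x ∧ r = QuotientAddGroup.mk (χ x)

def Tgt : Type :=
  Σ φ : {x // x ∈ X}, Σ ψ : {y // y ∈ Y φ.1}, Quot (orbRel φ.1 (ψ.1 : AddAut G))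

def NormTo (t : Trip G) (s : Tgt X Y) : Prop :=
  ∃ χ : AddAut G, χ * t.1.1.1 = s.1.1 * χ ∧ χ * t.1.1.2 = (s.2.1.1 : AddAut G) * χ ∧
    s.2.2 = Quot.mk _ (QuotientAddGroup.mk (χ t.1.2))

lemma exists_norm (hX : ∀ σ : AddAut G, ∃! τ : AddAut G, τ ∈ X ∧ IsConj τ σ)
    (hY : ∀ φ ∈ X, ∀ σ : (Subgroup.centralizer {φ} : Subgroup (AddAut G)),
      ∃! τ, τ ∈ Y φ ∧ IsConj τ σ)
    (t : Trip G) : ∃ s : Tgt X Y, NormTo X Y t s := by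
  obtain ⟨⟨⟨φ, ψ⟩, c⟩, hcomm⟩ := t
  obtain ⟨φ₀, ⟨hmem0, hconj0⟩, -⟩ := hX φ
  obtain ⟨u, hu⟩ := isConj_iff.mp hconj0
  have hφ₀ : u⁻¹ * φ * u = φ₀ := by rw [← hu]; group
  have hψ'c : (u⁻¹ * ψ * u) ∈ Subgroup.centralizer {φ₀} := by
    rw [Subgroup.mem_centralizer_singleton_iff, ← hφ₀]
    calc u⁻¹ * ψ * u * (u⁻¹ * φ * u) = u⁻¹ * (ψ * φ) * u := by group
      _ = u⁻¹ * (φ * ψ) * u := by rw [← hcomm]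
      _ = u⁻¹ * φ * u * (u⁻¹ * ψ * u) := by group
  obtain ⟨ψ₀, ⟨hmemY, hconjY⟩, -⟩ := hY φ₀ hmem0 ⟨u⁻¹ * ψ * u, hψ'c⟩
  obtain ⟨v, hv⟩ := isConj_iff.mp hconjY
  have hvcoe : (v : AddAut G) * (ψ₀ : AddAut G) * (v : AddAut G)⁻¹ = u⁻¹ * ψ * u := by
    have h := congrArg (Subtype.val) hv
    simpa using h
  have hvcent : (v : AddAut G) * φ₀ = φ₀ * (v : AddAut G) :=
    Subgroup.mem_centralizer_singleton_iff.mp v.2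
  set χ : AddAut G := (u * (v : AddAut G))⁻¹ with hχ
  have key1 : χ * φ * χ⁻¹ = φ₀ := by
    calc χ * φ * χ⁻¹ = (v : AddAut G)⁻¹ * (u⁻¹ * φ * u) * (v : AddAut G) := by rw [hχ]; group
      _ = (v : AddAut G)⁻¹ * φ₀ * (v : AddAut G) := by rw [hφ₀]
      _ = (v : AddAut G)⁻¹ * (φ₀ * (v : AddAut G)) := by group
      _ = (v : AddAut G)⁻¹ * ((v : AddAut G) * φ₀) := by rw [← hvcent]
      _ = φ₀ := by group
  have key2 : χ * ψ * χ⁻¹ = (ψ₀ : AddAut G) := by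
    calc χ * ψ * χ⁻¹ = (v : AddAut G)⁻¹ * (u⁻¹ * ψ * u) * (v : AddAut G) := by rw [hχ]; group
      _ = (v : AddAut G)⁻¹ * ((v : AddAut G) * (ψ₀ : AddAut G) * (v : AddAut G)⁻¹) *
          (v : AddAut G) := by rw [hvcoe]
      _ = (ψ₀ : AddAut G) := by group
  refine ⟨⟨⟨φ₀, hmem0⟩, ⟨ψ₀, hmemY⟩, Quot.mk _ (QuotientAddGroup.mk (χ c))⟩, χ, ?_, ?_, rfl⟩
  · calc χ * φ = χ * φ * χ⁻¹ * χ := by group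
      _ = φ₀ * χ := by rw [key1]
  · calc χ * ψ = χ * ψ * χ⁻¹ * χ := by group
      _ = (ψ₀ : AddAut G) * χ := by rw [key2]

end NormLayer

section UniqueLayer

variable {G : Type} [AddCommGroup G]
variable (X : Finset (AddAut G))
variable (Y : (φ : AddAut G) → Finset (Subgroup.centralizer {φ} : Subgroup (AddAut G)))

lemma norm_unique (hX : ∀ σ : AddAut G, ∃! τ : AddAut G, τ ∈ X ∧ IsConj τ σ)
    (hY : ∀ φ ∈ X, ∀ σ : (Subgroup.centralizer {φ} : Subgroup (AddAut G)),
      ∃! τ, τ ∈ Y φ ∧ IsConj τ σ)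
    {t t' : Trip G} {s s' : Tgt X Y}
    (hrel : TRel t t') (hn : NormTo X Y t s) (hn' : NormTo X Y t' s') : s = s' := by
  obtain ⟨⟨⟨φ, ψ⟩, c⟩, hcomm⟩ := t
  obtain ⟨⟨⟨φ', ψ'⟩, c'⟩, hcomm'⟩ := t'
  obtain ⟨⟨a, ha⟩, ⟨b, hb⟩, q⟩ := s
  obtain ⟨⟨a', ha'⟩, ⟨b', hb'⟩, q'⟩ := s'
  obtain ⟨χ, h1, h2, h3⟩ := hn
  obtain ⟨χ', h1', h2', h3'⟩ := hn'
  obtain ⟨θ, d, g1, g2, g3⟩ := hrel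
  simp only at h1 h2 h3 h1' h2' h3' g1 g2 g3
  -- first components agree
  have haa : a = a' := by
    obtain ⟨w, _, huniq⟩ := hX φ
    have c1 : IsConj a φ := conj_of_semiconj h1
    have c2 : IsConj a' φ := (conj_of_semiconj h1').trans (conj_of_semiconj g1)
    rw [huniq a ⟨ha, c1⟩, huniq a' ⟨ha', c2⟩]
  subst haa
  -- the mediating automorphism ρ
  set ρ : AddAut G := χ' * θ * χ⁻¹ with hρ
  have hρa : ρ * a = a * ρ := by
    calc ρ * a = χ' * θ * (χ⁻¹ * a) := by rw [hρ]; group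
      _ = χ' * θ * (φ * χ⁻¹) := by rw [semiconj_inv h1]
      _ = χ' * (θ * φ) * χ⁻¹ := by group
      _ = χ' * (φ' * θ) * χ⁻¹ := by rw [g1]
      _ = χ' * φ' * (θ * χ⁻¹) := by group
      _ = a * χ' * (θ * χ⁻¹) := by rw [h1']
      _ = a * ρ := by rw [hρ]; group
  have hρb : ρ * (b : AddAut G) = (b' : AddAut G) * ρ := by
    calc ρ * (b : AddAut G) = χ' * θ * (χ⁻¹ * (b : AddAut G)) := by rw [hρ]; group
      _ = χ' * θ * (ψ * χ⁻¹) := by rw [semiconj_inv h2]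
      _ = χ' * (θ * ψ) * χ⁻¹ := by group
      _ = χ' * (ψ' * θ) * χ⁻¹ := by rw [g2]
      _ = χ' * ψ' * (θ * χ⁻¹) := by group
      _ = (b' : AddAut G) * χ' * (θ * χ⁻¹) := by rw [h2']
      _ = (b' : AddAut G) * ρ := by rw [hρ]; group
  have hρcent : ρ ∈ Subgroup.centralizer {a} :=
    Subgroup.mem_centralizer_singleton_iff.mpr hρa
  -- second components agree
  have hbb : b = b' := by
    obtain ⟨w, _, huniq⟩ := hY a ha b
    have e2 : IsConj b' b := by
      refine isConj_iff.mpr ⟨(⟨ρ, hρcent⟩ : Subgroup.centralizer {a})⁻¹, ?_⟩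
      apply Subtype.ext
      push_cast
      calc ρ⁻¹ * (b' : AddAut G) * (ρ⁻¹)⁻¹ = ρ⁻¹ * ((b' : AddAut G) * ρ) := by group
        _ = ρ⁻¹ * (ρ * (b : AddAut G)) := by rw [← hρb]
        _ = (b : AddAut G) := by group
    rw [huniq b ⟨hb, IsConj.refl b⟩, huniq b' ⟨hb', e2⟩]
  subst hbb
  -- third components agree
  have hρχ : ρ * χ = χ' * θ := by rw [hρ]; group
  have hval : χ' c' = ρ (χ c) + oneSub a (b : AddAut G) (χ' d) := by
    rw [g3, map_add]
    congr 1
    · calc χ' (θ c) = (χ' * θ) c := by rw [addAut_mul_apply']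
        _ = (ρ * χ) c := by rw [hρχ]
        _ = ρ (χ c) := by rw [addAut_mul_apply']
    · rw [oneSub_apply, oneSub_apply, map_sub, map_sub, comm_apply h1', comm_apply h2']
  have hq2 : q' = Quot.mk _ (QuotientAddGroup.mk (ρ (χ c))) := by
    rw [h3']
    congr 1
    refine (QuotientAddGroup.eq).mpr ⟨-(χ' d), ?_⟩
    rw [map_neg, hval]
    abel
  have hq : q = q' := by
    rw [h3, hq2]
    exact Quot.sound ⟨ρ, Subgroup.mem_inf.mpr
      ⟨hρcent, Subgroup.mem_centralizer_singleton_iff.mpr hρb⟩, χ c, rfl, rfl⟩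
  subst hq
  rfl

end UniqueLayer

section FinalLayer

variable {G : Type} [AddCommGroup G]
variable (X : Finset (AddAut G))
variable (Y : (φ : AddAut G) → Finset (Subgroup.centralizer {φ} : Subgroup (AddAut G)))

lemma addaut_inv_apply (χ : AddAut G) (x : G) : χ⁻¹ (χ x) = x := by
  rw [← addAut_mul_apply', inv_mul_cancel, addAut_one_apply']

lemma trel_refl (t : Trip G) : TRel t t :=
  ⟨1, 0, by rw [one_mul, mul_one], by rw [one_mul, mul_one], by
    simp [addAut_one_apply']⟩

def invAux (s : Tgt X Y) : Quot (TRel (G := G)) := by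
  have hcomm : s.1.1 * (s.2.1.1 : AddAut G) = (s.2.1.1 : AddAut G) * s.1.1 :=
    (Subgroup.mem_centralizer_singleton_iff.mp s.2.1.1.2).symm
  refine Quot.lift (Quotient.lift (fun x : G => Quot.mk (TRel (G := G))
      ⟨((s.1.1, (s.2.1.1 : AddAut G)), x), hcomm⟩) ?_) ?_ s.2.2
  · intro x y hxy
    have hxy' : -x + y ∈ (oneSub s.1.1 (s.2.1.1 : AddAut G)).range :=
      QuotientAddGroup.leftRel_apply.mp hxy
    obtain ⟨d, hd⟩ := hxy'
    apply Quot.sound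
    refine ⟨1, d, by rw [one_mul, mul_one], by rw [one_mul, mul_one], ?_⟩
    show y = (1 : AddAut G) x + oneSub s.1.1 (s.2.1.1 : AddAut G) d
    rw [addAut_one_apply', hd]
    abel
  · intro q r hqr
    obtain ⟨χ, hmem, x, rfl, rfl⟩ := hqr
    apply Quot.sound
    obtain ⟨hm1, hm2⟩ := Subgroup.mem_inf.mp hmem
    refine ⟨χ, 0, Subgroup.mem_centralizer_singleton_iff.mp hm1,
      Subgroup.mem_centralizer_singleton_iff.mp hm2, by simp⟩

noncomputable def normFun (hX : ∀ σ : AddAut G, ∃! τ : AddAut G, τ ∈ X ∧ IsConj τ σ)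
    (hY : ∀ φ ∈ X, ∀ σ : (Subgroup.centralizer {φ} : Subgroup (AddAut G)),
      ∃! τ, τ ∈ Y φ ∧ IsConj τ σ) (t : Trip G) : Tgt X Y :=
  (exists_norm X Y hX hY t).choose

lemma normFun_spec (hX : ∀ σ : AddAut G, ∃! τ : AddAut G, τ ∈ X ∧ IsConj τ σ)
    (hY : ∀ φ ∈ X, ∀ σ : (Subgroup.centralizer {φ} : Subgroup (AddAut G)),
      ∃! τ, τ ∈ Y φ ∧ IsConj τ σ) (t : Trip G) :
    NormTo X Y t (normFun X Y hX hY t) :=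
  (exists_norm X Y hX hY t).choose_spec

noncomputable def E2 (hX : ∀ σ : AddAut G, ∃! τ : AddAut G, τ ∈ X ∧ IsConj τ σ)
    (hY : ∀ φ ∈ X, ∀ σ : (Subgroup.centralizer {φ} : Subgroup (AddAut G)),
      ∃! τ, τ ∈ Y φ ∧ IsConj τ σ) :
    Quot (TRel (G := G)) ≃ Tgt X Y where
  toFun := Quot.lift (normFun X Y hX hY) (fun t t' h =>
    norm_unique X Y hX hY h (normFun_spec X Y hX hY t) (normFun_spec X Y hX hY t'))
  invFun := invAux X Y
  left_inv := by
    intro q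
    induction q using Quot.ind with
    | _ t =>
      obtain ⟨χ, k1, k2, k3⟩ := normFun_spec X Y hX hY t
      set s := normFun X Y hX hY t with hs
      show invAux X Y s = Quot.mk _ t
      have step : invAux X Y s =
          invAux X Y ⟨s.1, s.2.1, Quot.mk _ (QuotientAddGroup.mk (χ t.1.2))⟩ := by
        have h := congrArg (fun z => invAux X Y ⟨s.1, s.2.1, z⟩) k3
        exact h
      rw [step]
      apply Quot.sound
      refine ⟨χ⁻¹, 0, semiconj_inv k1, semiconj_inv k2, ?_⟩
      show t.1.2 = χ⁻¹ (χ t.1.2) + oneSub t.1.1.1 t.1.1.2 0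
      rw [addaut_inv_apply, map_zero, add_zero]
  right_inv := by
    intro s
    obtain ⟨A, B, q⟩ := s
    induction q using Quot.ind with
    | _ x' =>
      induction x' using QuotientAddGroup.induction_on with
      | H x =>
        have hcomm : A.1 * (B.1.1 : AddAut G) = (B.1.1 : AddAut G) * A.1 :=
          (Subgroup.mem_centralizer_singleton_iff.mp B.1.2).symm
        show normFun X Y hX hY ⟨((A.1, (B.1.1 : AddAut G)), x), hcomm⟩ = _
        refine norm_unique X Y hX hY (trel_refl _)
          (normFun_spec X Y hX hY _) ⟨1, by rw [one_mul, mul_one], by rw [one_mul, mul_one], ?_⟩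
        show Quot.mk _ (QuotientAddGroup.mk x) =
          Quot.mk _ (QuotientAddGroup.mk ((1 : AddAut G) x))
        rw [addAut_one_apply']

lemma myCardSigma {ι : Type} [Fintype ι] (f : ι → Type) [∀ i, Finite (f i)] :
    Nat.card ((i : ι) × f i) = ∑ i, Nat.card (f i) := by
  letI : ∀ i, Fintype (f i) := fun i => Fintype.ofFinite _
  simp [Nat.card_eq_fintype_card]

end FinalLayer


/-- Drápal's theorem: for a finite abelian group `G`, the number of isomorphism
classes of medial quasigroups with an affine form over `G` is
`∑_{φ ∈ X} ∑_{ψ ∈ Y_φ} N(φ, ψ)`, where `X` is a set of conjugacy class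
representatives of `Aut G`, `Y_φ` a set of conjugacy class representatives of the
centralizer `C(φ)` (conjugation within `C(φ)`), and `N(φ,ψ)` the number of orbits
of `C(φ) ∩ C(ψ)` acting on `G ⧸ Im(1 - φ - ψ)`. -/
theorem drapal (G : Type) [AddCommGroup G] [Finite G]
    (X : Finset (AddAut G))
    (hX : ∀ σ : AddAut G, ∃! τ : AddAut G, τ ∈ X ∧ IsConj τ σ)
    (Y : (φ : AddAut G) → Finset (Subgroup.centralizer {φ} : Subgroup (AddAut G)))
    (hY : ∀ φ ∈ X, ∀ σ : (Subgroup.centralizer {φ} : Subgroup (AddAut G)),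
      ∃! τ, τ ∈ Y φ ∧ IsConj τ σ) :
    mqG G = ∑ φ ∈ X, ∑ ψ ∈ Y φ, nOrbits G φ (ψ : AddAut G) := by
  have E : Quot (ORel (G := G)) ≃ Tgt X Y := (E1 G).trans (E2 X Y hX hY)
  have h1 : mqG G = Nat.card (Tgt X Y) := Nat.card_congr E
  rw [h1]
  calc Nat.card (Tgt X Y)
      = ∑ φ : {x // x ∈ X}, Nat.card (Σ ψ : {y // y ∈ Y φ.1},
          Quot (orbRel (G := G) φ.1 (ψ.1 : AddAut G))) := myCardSigma _
    _ = ∑ φ : {x // x ∈ X}, ∑ ψ ∈ Y φ.1, nOrbits G φ.1 (ψ : AddAut G) := by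
        refine Finset.sum_congr rfl fun φ _ => ?_
        calc Nat.card (Σ ψ : {y // y ∈ Y φ.1}, Quot (orbRel (G := G) φ.1 (ψ.1 : AddAut G)))
            = ∑ ψ : {y // y ∈ Y φ.1},
                Nat.card (Quot (orbRel (G := G) φ.1 (ψ.1 : AddAut G))) := myCardSigma _
          _ = ∑ ψ : {y // y ∈ Y φ.1}, nOrbits G φ.1 (ψ.1 : AddAut G) := rfl
          _ = ∑ ψ ∈ Y φ.1, nOrbits G φ.1 (ψ : AddAut G) :=
              Finset.sum_coe_sort (Y φ.1) (fun y => nOrbits G φ.1 (y : AddAut G))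
    _ = ∑ φ ∈ X, ∑ ψ ∈ Y φ, nOrbits G φ (ψ : AddAut G) :=
        Finset.sum_coe_sort X (fun φ => ∑ ψ ∈ Y φ, nOrbits G φ (ψ : AddAut G))
end

section
/- Let p be prime, let a, b ∈ F_p be such that the polynomial x^2 - bx - a is irreducible over F_p, let φ = [[0,1],[a,b]], and let ψ = [[u,v],[av,u+bv]] with (u,v) ≠ (0,0). Then det(I - φ - ψ) = (1-u)^2 - b(1-u)(1+v) - a(1+v)^2, and the matrix I - φ - ψ is singular if and only if u = 1 and v = -1. -/
open Polynomial

lemma no_root_aux (p : ℕ) [Fact p.Prime] (a b : ZMod p)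
    (hirr : Irreducible (X ^ 2 - C b * X - C a)) (r : ZMod p) :
    r ^ 2 - b * r - a ≠ 0 := by
  intro hr
  have hroot : (X ^ 2 - C b * X - C a).IsRoot r := by
    simp [IsRoot, hr]
  obtain ⟨c, hc⟩ := (dvd_iff_isRoot).2 hroot
  have hc0 : c ≠ 0 := by
    rintro rfl
    rw [mul_zero] at hc
    exact hirr.ne_zero hc
  rcases hirr.2 hc with h | h
  · exact (Polynomial.not_isUnit_X_sub_C r) h
  · have hdeg : (X ^ 2 - C b * X - C a).natDegree = 2 := by
      compute_degree!
    rw [hc, natDegree_mul (X_sub_C_ne_zero r) hc0, natDegree_X_sub_C,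
      Polynomial.natDegree_eq_zero_of_isUnit h] at hdeg
    simp at hdeg

/-- For `φ = [[0,1],[a,b]]` with `x² - bx - a` irreducible over `F_p`, and
`ψ = [[u,v],[av,u+bv]]` with `(u,v) ≠ (0,0)`, the determinant of `I - φ - ψ` is
`(1-u)² - b(1-u)(1+v) - a(1+v)²`, and `I - φ - ψ` is singular iff `u = 1, v = -1`. -/
theorem det_one_sub_companion (p : ℕ) [Fact p.Prime] (a b u v : ZMod p)
    (hirr : Irreducible (X ^ 2 - C b * X - C a)) (huv : (u, v) ≠ (0, 0)) :
    (1 - !![0, 1; a, b] - !![u, v; a * v, u + b * v]).det =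
        (1 - u) ^ 2 - b * (1 - u) * (1 + v) - a * (1 + v) ^ 2 ∧
      ((1 - !![0, 1; a, b] - !![u, v; a * v, u + b * v]).det = 0 ↔ u = 1 ∧ v = -1) := by
  have hdet : (1 - !![0, 1; a, b] - !![u, v; a * v, u + b * v]).det =
      (1 - u) ^ 2 - b * (1 - u) * (1 + v) - a * (1 + v) ^ 2 := by
    simp [Matrix.det_fin_two, Matrix.one_fin_two]
    ring
  refine ⟨hdet, ?_⟩
  rw [hdet]
  constructor
  · intro h
    by_cases hv : 1 + v = 0
    · have hu : (1 - u) ^ 2 = 0 := by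
        linear_combination h + (b * (1 - u) + a * (1 + v)) * hv
      have hu' : 1 - u = 0 := by
        exact sq_eq_zero_iff.mp hu
      exact ⟨by linear_combination -hu', by linear_combination hv⟩
    · exfalso
      have key : ((1 - u) / (1 + v)) ^ 2 - b * ((1 - u) / (1 + v)) - a =
          ((1 - u) ^ 2 - b * (1 - u) * (1 + v) - a * (1 + v) ^ 2) / (1 + v) ^ 2 := by
        field_simp
      exact no_root_aux p a b hirr ((1 - u) / (1 + v)) (key.trans (by rw [h]; simp))
  · rintro ⟨rfl, rfl⟩
    ring
end
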